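/- Let x(u,v) = (1, sin u, cos u cos v, cos u sin v, 1) in E^5_1, a surface M in S^4_1(1) with induced metric du^2 + cos^2 u dv^2. Then the Laplace–Beltrami operator of this metric applied to x gives Δx = -(1/cos^2 u) x_vv - x_uu + tan u · x_u = 2x - 2(1,0,0,0,1), and the mean curvature vector of M in S^4_1(1) is the constant vector H = (1,0,0,0,1); in particular ⟨H,H⟩ = -1 + 1 = 0 and H ≠ 0, so M is quasi-minimal in S^4_1(1). -/

import Mathlib

open Real

/-- The indefinite inner product of the Minkowski space `E⁵₁`. -/
noncomputable def mink (x y : Fin 5 → ℝ) : ℝ :=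
  -(x 0 * y 0) + x 1 * y 1 + x 2 * y 2 + x 3 * y 3 + x 4 * y 4

/-- The surface (i): `x(u,v) = (1, sin u, cos u cos v, cos u sin v, 1)`. -/
noncomputable def surf (u v : ℝ) : Fin 5 → ℝ :=
  ![1, Real.sin u, Real.cos u * Real.cos v, Real.cos u * Real.sin v, 1]

/-- Partial derivative with respect to `u`. -/
noncomputable def surfU (u v : ℝ) : Fin 5 → ℝ := fun i => deriv (fun t => surf t v i) u

/-- Second partial derivative with respect to `u`. -/
noncomputable def surfUU (u v : ℝ) : Fin 5 → ℝ :=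
  fun i => deriv (fun t => deriv (fun s => surf s v i) t) u

/-- Second partial derivative with respect to `v`. -/
noncomputable def surfVV (u v : ℝ) : Fin 5 → ℝ :=
  fun i => deriv (fun t => deriv (fun s => surf u s i) t) v

/-- The Laplace–Beltrami operator of the induced metric `du² + cos²u dv²` applied to the
position vector: `Δx = -(1/cos²u) x_vv - x_uu + tan u · x_u`. -/
noncomputable def lapSurf (u v : ℝ) : Fin 5 → ℝ :=
  fun i => -(1 / Real.cos u ^ 2) * surfVV u v i - surfUU u v i + Real.tan u * surfU u v i

/-- The mean curvature vector of the surface in `S⁴₁(1)`: `H = x - (1/2)Δx`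
(since `Δx = -2Ĥ` and `Ĥ = H - x`). -/
noncomputable def meanCurv (u v : ℝ) : Fin 5 → ℝ :=
  fun i => surf u v i - (1 / 2) * lapSurf u v i

lemma surfU_eq (u v : ℝ) :
    surfU u v = ![0, Real.cos u, -Real.sin u * Real.cos v, -Real.sin u * Real.sin v, 0] := by
  funext i; fin_cases i <;> simp [surfU, surf]

lemma surfUU_eq (u v : ℝ) :
    surfUU u v = ![0, -Real.sin u, -(Real.cos u * Real.cos v), -(Real.cos u * Real.sin v), 0] := by
  funext i
  have h : surfUU u v i = deriv (fun t => surfU t v i) u := rfl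
  rw [h]
  simp only [surfU_eq]
  fin_cases i <;> simp

lemma surfVV_eq (u v : ℝ) :
    surfVV u v = ![0, 0, -(Real.cos u * Real.cos v), -(Real.cos u * Real.sin v), 0] := by
  funext i
  have h2 : (fun t => deriv (fun s => surf u s i) t)
      = fun t => (![0, 0, Real.cos u * (-Real.sin t), Real.cos u * Real.cos t, 0] : Fin 5 → ℝ) i := by
    funext t; fin_cases i <;> simp [surf]
  show deriv _ v = _
  rw [h2]
  fin_cases i <;> simp

/-- For the surface `x(u,v) = (1, sin u, cos u cos v, cos u sin v, 1)` in `S⁴₁(1) ⊂ E⁵₁`,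
wherever `cos u ≠ 0` the Laplace–Beltrami operator of the metric `du² + cos²u dv²` gives
`Δx = -(1/cos²u) x_vv - x_uu + tan u · x_u = 2x - 2(1,0,0,0,1)`, so the mean curvature
vector of `M` in `S⁴₁(1)` is the constant vector `H = (1,0,0,0,1)`, which satisfies
`⟨H,H⟩ = -1 + 1 = 0` and `H ≠ 0`: the surface is quasi-minimal in `S⁴₁(1)`. -/
theorem surface_i_quasiMinimal :
    ∀ u v : ℝ, Real.cos u ≠ 0 →
      (∀ i, lapSurf u v i = 2 * surf u v i - 2 * (![1, 0, 0, 0, 1] : Fin 5 → ℝ) i) ∧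
      meanCurv u v = ![1, 0, 0, 0, 1] ∧
      mink (![1, 0, 0, 0, 1]) (![1, 0, 0, 0, 1]) = 0 ∧
      (![1, 0, 0, 0, 1] : Fin 5 → ℝ) ≠ 0 := by
  intro u v hc
  have hlap : ∀ i, lapSurf u v i = 2 * surf u v i - 2 * (![1, 0, 0, 0, 1] : Fin 5 → ℝ) i := by
    intro i
    simp only [lapSurf, surfU_eq, surfUU_eq, surfVV_eq, surf, Real.tan_eq_sin_div_cos]
    fin_cases i
    · simp
    · simp; field_simp; ring
    · simp; field_simp
      linear_combination (-(Real.cos v)) * Real.sin_sq_add_cos_sq u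
    · simp; field_simp
      linear_combination (-(Real.sin v)) * Real.sin_sq_add_cos_sq u
    · simp
  refine ⟨hlap, ?_, by simp [mink], ?_⟩
  · funext i
    simp only [meanCurv, hlap i]
    ring
  · intro h
    have := congrFun h 0
    norm_num at this
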